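/- arXiv:1910.01051 — 2 statements merged into one kernel-verified Lean document; each statement's English description precedes it below -/
import Mathlib

section
/- Let X be a metric space and suppose X is thick of order at most n for some n ≥ 0 according to the inductive definition (order 0: no asymptotic cone has a cut point; order ≤ n: coarsely covered by uniformly thick-of-order-≤(n−1) subsets that thickly chain). If Y is a metric space quasi-isometric to X, then Y is thick of order at most n. -/
/-- The closed `C`-neighborhood of a subset. -/
def Nbhd {X : Type} [MetricSpace X] (C : ℝ) (A : Set X) : Set X :=
  {x | ∃ a ∈ A, dist x a ≤ C}

/-- `f` is a quasi-isometry: a quasi-isometric embedding with coarsely dense image. -/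
def IsQI {X Y : Type} [MetricSpace X] [MetricSpace Y] (f : X → Y) : Prop :=
  ∃ K L C : ℝ, 1 ≤ K ∧ 0 ≤ L ∧ 0 ≤ C ∧
    (∀ a b : X, (dist a b - L) / K ≤ dist (f a) (f b) ∧
      dist (f a) (f b) ≤ K * dist a b + L) ∧
    ∀ y : Y, ∃ x : X, dist y (f x) ≤ C

/-- Thickness of order at most `n`, relative to a base predicate `P` (order 0,
"no asymptotic cone has a cut point"): a space is thick of order at most `n+1`
if it is coarsely covered by subsets thick of order at most `n`, any two of
which are joined by a chain of such subsets with consecutive `C`-neighborhoods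
intersecting in an infinite-diameter set. -/
def ThickOrder (P : ∀ (X : Type) [MetricSpace X], Prop) :
    ℕ → ∀ (X : Type) [MetricSpace X], Prop
  | 0, X, i => letI := i; P X
  | n + 1, X, i =>
    letI := i
    ∃ C : ℝ, 0 ≤ C ∧ ∃ Ps : Set (Set X),
      (∀ A ∈ Ps, ThickOrder P n A) ∧
      (∀ x : X, ∃ A ∈ Ps, ∃ a ∈ A, dist x a ≤ C) ∧
      (∀ A ∈ Ps, ∀ B ∈ Ps, ∃ k : ℕ, ∃ c : Fin (k + 1) → Set X,
        (∀ i', c i' ∈ Ps) ∧ c 0 = A ∧ c (Fin.last k) = B ∧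
        ∀ i' : Fin k, EMetric.diam (Nbhd C (c i'.castSucc) ∩ Nbhd C (c i'.succ)) = ⊤)

/-- A map with a QI-type lower distance bound sends infinite-diameter sets to
infinite-diameter sets. -/
lemma qi_image_unbounded {X Y : Type} [MetricSpace X] [MetricSpace Y]
    {f : X → Y} {K L : ℝ} (hK : 1 ≤ K) (hL : 0 ≤ L)
    (hlow : ∀ a b : X, (dist a b - L) / K ≤ dist (f a) (f b))
    {S : Set X} (hS : EMetric.diam S = ⊤) : EMetric.diam (f '' S) = ⊤ := by
  by_contra h
  have hb : Bornology.IsBounded (f '' S) := Metric.isBounded_iff_ediam_ne_top.2 h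
  obtain ⟨C₁, hC₁⟩ := Metric.isBounded_iff.1 hb
  have hK0 : (0 : ℝ) < K := lt_of_lt_of_le one_pos hK
  have hb' : Bornology.IsBounded S := by
    refine Metric.isBounded_iff.2 ⟨K * C₁ + L, ?_⟩
    intro a ha b hb
    have h1 := hlow a b
    have h2 := hC₁ ⟨a, ha, rfl⟩ ⟨b, hb, rfl⟩
    have h3 : (dist a b - L) / K ≤ C₁ := le_trans h1 h2
    have h4 : dist a b - L ≤ C₁ * K := (div_le_iff₀ hK0).1 h3
    nlinarith
  exact Metric.isBounded_iff_ediam_ne_top.1 hb' hS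

/-- Restriction of a quasi-isometry to a subset is a quasi-isometry onto the image. -/
lemma qi_restrict {X Y : Type} [MetricSpace X] [MetricSpace Y]
    {f : X → Y} {K L : ℝ} (hK : 1 ≤ K) (hL : 0 ≤ L)
    (hemb : ∀ a b : X, (dist a b - L) / K ≤ dist (f a) (f b) ∧
      dist (f a) (f b) ≤ K * dist a b + L) (A : Set X) :
    ∃ g : A → (f '' A : Set Y), IsQI g := by
  refine ⟨fun a => ⟨f a.1, a.1, a.2, rfl⟩, K, L, 0, hK, hL, le_refl 0, ?_, ?_⟩
  · intro a b
    simpa [Subtype.dist_eq] using hemb a.1 b.1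
  · rintro ⟨y, a, ha, rfl⟩
    exact ⟨⟨a, ha⟩, by simp [Subtype.dist_eq]⟩

/-- Thickness of order at most `n` is a quasi-isometry invariant, provided the
order-0 condition is. -/
theorem thick_qi_invariant (P : ∀ (X : Type) [MetricSpace X], Prop)
    (hP : ∀ (X Y : Type) [MetricSpace X] [MetricSpace Y],
      (∃ f : X → Y, IsQI f) → P X → P Y)
    (n : ℕ) (X Y : Type) [MetricSpace X] [MetricSpace Y]
    (hXY : ∃ f : X → Y, IsQI f) (hX : ThickOrder P n X) : ThickOrder P n Y := by
  induction n generalizing X Y with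
  | zero => exact hP X Y hXY hX
  | succ n ih =>
    obtain ⟨f, K, L, C₀, hK, hL, hC₀, hemb, hdense⟩ := hXY
    obtain ⟨C, hC, Ps, hthick, hcov, hchain⟩ := hX
    have hK0 : (0 : ℝ) < K := lt_of_lt_of_le one_pos hK
    set C' : ℝ := C₀ + (K * C + L) with hC'def
    have hKC : 0 ≤ K * C + L := by positivity
    have hC' : 0 ≤ C' := by positivity
    -- key neighborhood inclusion
    have hincl : ∀ (S : Set X) (x : X), x ∈ Nbhd C S → f x ∈ Nbhd C' (f '' S) := by
      rintro S x ⟨a, ha, hxa⟩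
      refine ⟨f a, ⟨a, ha, rfl⟩, ?_⟩
      have h2 := (hemb x a).2
      have h3 : K * dist x a ≤ K * C := mul_le_mul_of_nonneg_left hxa (le_of_lt hK0)
      have : dist (f x) (f a) ≤ K * C + L := by linarith
      linarith [hC₀]
    refine ⟨C', hC', (fun A => f '' A) '' Ps, ?_, ?_, ?_⟩
    · rintro _ ⟨A, hA, rfl⟩
      obtain ⟨g, hg⟩ := qi_restrict hK hL hemb A
      exact ih A (f '' A) ⟨g, hg⟩ (hthick A hA)
    · intro y
      obtain ⟨x, hx⟩ := hdense y
      obtain ⟨A, hA, a, ha, hxa⟩ := hcov x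
      refine ⟨f '' A, ⟨A, hA, rfl⟩, f a, ⟨a, ha, rfl⟩, ?_⟩
      have h2 := (hemb x a).2
      have h3 : K * dist x a ≤ K * C := mul_le_mul_of_nonneg_left hxa (le_of_lt hK0)
      calc dist y (f a) ≤ dist y (f x) + dist (f x) (f a) := dist_triangle _ _ _
        _ ≤ C₀ + (K * C + L) := by linarith
    · rintro _ ⟨A, hA, rfl⟩ _ ⟨B, hB, rfl⟩
      obtain ⟨k, c, hcmem, hc0, hclast, hcdiam⟩ := hchain A hA B hB
      refine ⟨k, fun i => f '' (c i), fun i => ⟨c i, hcmem i, rfl⟩, by simp only [hc0],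
        by simp only [hclast], ?_⟩
      intro i
      have himg : f '' (Nbhd C (c i.castSucc) ∩ Nbhd C (c i.succ)) ⊆
          Nbhd C' (f '' (c i.castSucc)) ∩ Nbhd C' (f '' (c i.succ)) := by
        rintro _ ⟨x, ⟨hx1, hx2⟩, rfl⟩
        exact ⟨hincl _ x hx1, hincl _ x hx2⟩
      have hdi := qi_image_unbounded hK hL (fun a b => (hemb a b).1) (hcdiam i)
      exact top_le_iff.1 (hdi ▸ EMetric.diam_mono himg)
end

section
/- Let Γ be a graph whose vertices are elements of a set V, with a group G acting on V preserving the edge relation, such that G acts transitively on the vertex set of Γ. Fix v₀ ∈ V and a symmetric generating set X of G such that v₀ and g·v₀ are adjacent or equal in Γ for every g ∈ X. Then Γ is connected. -/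
/-- Putman's trick under a vertex-transitive action: if the base vertex is
adjacent or equal to its image under each generator, the graph is connected. -/
theorem putman_transitive {V G : Type*} [Group G] [MulAction G V]
    (Γ : SimpleGraph V)
    (hact : ∀ (g : G) (u v : V), Γ.Adj u v → Γ.Adj (g • u) (g • v))
    (htrans : ∀ u v : V, ∃ g : G, g • u = v)
    (v₀ : V) (X : Set G) (hsymm : ∀ g ∈ X, g⁻¹ ∈ X)
    (hgen : Subgroup.closure X = ⊤)
    (hX : ∀ g ∈ X, Γ.Adj v₀ (g • v₀) ∨ g • v₀ = v₀) :
    Γ.Connected := by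
  have hmap : ∀ (g : G) {u v : V}, Γ.Reachable u v → Γ.Reachable (g • u) (g • v) := by
    intro g u v h
    exact h.map ⟨fun x => g • x, fun h => hact g _ _ h⟩
  have key : ∀ g : G, Γ.Reachable v₀ (g • v₀) := by
    intro g
    have hg : g ∈ Subgroup.closure X := by rw [hgen]; trivial
    induction hg using Subgroup.closure_induction with
    | mem x hx =>
        rcases hX x hx with h | h
        · exact h.reachable
        · rw [h]
    | one => rw [one_smul]
    | mul x y hx hy ihx ihy =>
        refine ihx.trans ?_
        have := hmap x ihy
        rwa [mul_smul]
    | inv x hx ih =>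
        have := hmap x⁻¹ ih
        rw [inv_smul_smul] at this
        exact this.symm
  have hpre : Γ.Preconnected := by
    intro u v
    obtain ⟨g, hg⟩ := htrans v₀ u
    obtain ⟨h, hh⟩ := htrans v₀ v
    exact (hg ▸ (key g).symm).trans (hh ▸ key h)
  haveI : Nonempty V := ⟨v₀⟩
  exact ⟨hpre⟩
end
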